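/- Let A = { [a(n,k)] · [w(n,k)] : n,k ≥ 2 } ⊆ π₁(HE,p) and let M : π₁(HE,p) × π₁(HE,p) → π₁(HE,p) be concatenation multiplication. Then M^{-1}(A) is not closed in π₁(HE,p) × π₁(HE,p): the point ([P],[P]) lies in the closure of M^{-1}(A) but not in M^{-1}(A). -/

import Mathlib

/-!
Unwrap the first circle `X₁` of the earring by pulling back the covering `ℝ → ℝ/2πℤ` along the
angular coordinate of `X₁`, and on this covering lift to `ℝ` the angular coordinate of `X_k`,
seen only over the sheet through `0`. The endpoint of the second lift is a homotopy invariant of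
based loops. On a word it is `2π` times the total exponent of the letters `x_k` read while the
exponent sum of the `x₁` read so far vanishes: `0` on the constant loop and on `a(n,k)`, and
`-2πn` on `w(n,k)`. So no `[a(n,k)] · [w(n,k)]` is trivial.

On the other hand `a(n,k)` is uniformly within `2/n` of the constant loop, and `w(n,k)` within
`2/k` of the null-homotopic loop `(x₁ x₀ x₁⁻¹ x₀⁻¹)^n`, `x₀` being constant. As the quotient map
is continuous, every neighbourhood of `([P],[P])` contains some `([a(n,k)], [w(n,k)])`.
-/

open unitInterval

noncomputable section

/-- The `n`-th circle of the Hawaiian earring: the circle of radius `1/n`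
centered at `(1/n, 0)` in the plane. -/
def heCircle (n : ℕ) : Set (ℝ × ℝ) :=
  {z : ℝ × ℝ | (z.1 - 1 / (n : ℝ)) ^ 2 + z.2 ^ 2 = (1 / (n : ℝ)) ^ 2}

/-- The Hawaiian earring `HE = ⋃_{n ≥ 1} X_n`. -/
def HEset : Set (ℝ × ℝ) := ⋃ n : ℕ, ⋃ _ : 1 ≤ n, heCircle n

lemma origin_mem_HEset : ((0, 0) : ℝ × ℝ) ∈ HEset := by
  refine Set.mem_iUnion.2 ⟨1, Set.mem_iUnion.2 ⟨le_refl 1, ?_⟩⟩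
  simp [heCircle]

/-- The basepoint `p = (0,0)` of the Hawaiian earring. -/
def hep : HEset := ⟨(0, 0), origin_mem_HEset⟩

/-- The point of the `n`-th circle at (counterclockwise) angle `θ` from the basepoint. -/
def circlePt (n : ℕ) (θ : ℝ) : ℝ × ℝ :=
  (1 / (n : ℝ) - Real.cos θ / n, -(Real.sin θ / n))

lemma circlePt_mem (n : ℕ) (θ : ℝ) : circlePt n θ ∈ HEset := by
  rcases Nat.eq_zero_or_pos n with h | h
  · subst h
    simpa [circlePt] using origin_mem_HEset
  · refine Set.mem_iUnion.2 ⟨n, Set.mem_iUnion.2 ⟨h, ?_⟩⟩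
    have hn : (n : ℝ) ≠ 0 := Nat.cast_ne_zero.2 h.ne'
    have hsc := Real.sin_sq_add_cos_sq θ
    simp only [heCircle, circlePt, Set.mem_setOf_eq]
    field_simp
    linarith [hsc]

/-- The standard loop `x_n` traversing the `n`-th circle of the Hawaiian earring
once counterclockwise.  (For `n = 0` this degenerates to the constant loop at `p`.) -/
def xLoop (n : ℕ) : Path hep hep where
  toFun := fun τ => ⟨circlePt n (2 * Real.pi * τ), circlePt_mem n _⟩
  continuous_toFun := by
    apply Continuous.subtype_mk
    have h1 : Continuous fun θ : ℝ => circlePt n θ := by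
      unfold circlePt; fun_prop
    exact h1.comp (by fun_prop)
  source' := by
    apply Subtype.ext
    simp [circlePt, hep]
  target' := by
    apply Subtype.ext
    simp [circlePt, hep, Real.cos_two_pi, Real.sin_two_pi]

attribute [local instance] Path.Homotopic.setoid

/-- The loop corresponding to a single letter `x_n` (if the Bool is `true`)
or `x_n⁻¹` (if the Bool is `false`). -/
def heLetter (l : ℕ × Bool) : Path hep hep :=
  if l.2 then xLoop l.1 else (xLoop l.1).symm

/-- The based loop corresponding to a finite word in the letters `x_n^{±1}`,
obtained by concatenating the letter loops. -/
def wordLoop (L : List (ℕ × Bool)) : Path hep hep :=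
  L.foldr (fun l acc => (heLetter l).trans acc) (Path.refl hep)

/-- The word `x_n x_k x_n⁻¹ x_k⁻¹`. -/
def commWord (n k : ℕ) : List (ℕ × Bool) := [(n, true), (k, true), (n, false), (k, false)]

/-- The loop `a(n,k)`, corresponding to the word `(x_n x_k x_n⁻¹ x_k⁻¹)^{n+k}`. -/
def aLoop (n k : ℕ) : Path hep hep :=
  wordLoop ((List.replicate (n + k) (commWord n k)).flatten)

/-- The loop `w(n,k)`, corresponding to the word `(x₁ x_k x₁⁻¹ x_k⁻¹)^{n}`. -/
def wLoop (n k : ℕ) : Path hep hep :=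
  wordLoop ((List.replicate n (commWord 1 k)).flatten)

/-- The fundamental group `π₁(HE, p)` as the set of path-homotopy classes of based
loops at `p`. -/
abbrev piHE : Type := Path.Homotopic.Quotient hep hep

/-- The quotient topology on `π₁(HE,p)` induced by the natural surjection from the
space of based loops (with the compact-open topology, i.e. uniform convergence). -/
instance : TopologicalSpace piHE :=
  inferInstanceAs (TopologicalSpace (Quotient (Path.Homotopic.setoid hep hep)))

/-- The natural quotient map `q : L(HE,p) → π₁(HE,p)`. -/
def qHE : Path hep hep → piHE := fun f => ⟦f⟧

/-- Multiplication on `π₁(HE,p)` by concatenation of path classes. -/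
def piMul : piHE × piHE → piHE := fun z => Path.Homotopic.Quotient.trans z.1 z.2

/-- Inversion on `π₁(HE,p)`, induced by reversal of loops. -/
def piInv : piHE → piHE :=
  Quotient.map Path.symm fun _ _ h => Nonempty.map Path.Homotopy.symm₂ h

/-- `IsOscWitness n f m t` says that the points `t 0 = 0 < t 1 < ⋯ < t (2m) = 1`
witness that the oscillation number `O_n(f)` is at least `m`: the even-indexed points
are sent by `f` to `p = (0,0)` and the odd-indexed points to `q_n = (2/n, 0)`. -/
def IsOscWitness (n : ℕ) (f : Path hep hep) (m : ℕ) (t : Fin (2 * m + 1) → I) : Prop :=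
  StrictMono t ∧ t ⟨0, by omega⟩ = 0 ∧ t ⟨2 * m, by omega⟩ = 1 ∧
    (∀ i : Fin (2 * m + 1), Even (i : ℕ) → ((f (t i) : ℝ × ℝ) = (0, 0))) ∧
    (∀ i : Fin (2 * m + 1), ¬ Even (i : ℕ) → ((f (t i) : ℝ × ℝ) = (2 / (n : ℝ), 0)))

/-- The oscillation number `O_n(f)`: the largest `m` admitting a witness
(`0` if there is none, and junk if there are arbitrarily large ones). -/
def OscNum (n : ℕ) (f : Path hep hep) : ℕ :=
  sSup {m : ℕ | ∃ t, IsOscWitness n f m t}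

/-- The finite wedge `Y_N = {p} ∪ X₁ ∪ ⋯ ∪ X_N`. -/
def Yset (N : ℕ) : Set (ℝ × ℝ) :=
  insert (0, 0) (⋃ n ∈ Set.Icc 1 N, heCircle n)

/-- The set `F` of pairs `([a(n,k)], [w(n,k)])` for `n, k ≥ 2`. -/
def Fset : Set (piHE × piHE) :=
  {z | ∃ n k : ℕ, 2 ≤ n ∧ 2 ≤ k ∧ z = (⟦aLoop n k⟧, ⟦wLoop n k⟧)}

/-- The set `A = M(F)` of products `[a(n,k)] ⬝ [w(n,k)]` for `n, k ≥ 2`. -/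
def Aset : Set piHE :=
  {c | ∃ n k : ℕ, 2 ≤ n ∧ 2 ≤ k ∧ c = Path.Homotopic.Quotient.trans ⟦aLoop n k⟧ ⟦wLoop n k⟧}


open Real Topology Filter

theorem IsCoveringMap.pullback {E Y X : Type*} [TopologicalSpace E] [TopologicalSpace Y]
    [TopologicalSpace X] {p : E → Y} (hp : IsCoveringMap p) {f : X → Y} (hf : Continuous f) :
    IsCoveringMap fun z : {z : E × X // p z.1 = f z.2} => z.1.2 := by
  intro x
  obtain ⟨hI, U, hxU, hU, -, H, hH⟩ := hp (f x)
  have hmem (z : {z : E × X // p z.1 = f z.2}) (hz : f z.1.2 ∈ U) : p z.1.1 ∈ U := z.2 ▸ hz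
  have hsymm (y : U) (i : p ⁻¹' {f x}) : p (H.symm (y, i)) = y := by
    rw [← hH, H.apply_symm_apply]
  let H' : (fun z : {z : E × X // p z.1 = f z.2} => z.1.2) ⁻¹' (f ⁻¹' U) ≃ₜ
      (f ⁻¹' U) × (p ⁻¹' {f x}) :=
  { toFun z := (⟨z.1.1.2, z.2⟩, (H ⟨z.1.1.1, hmem z.1 z.2⟩).2)
    invFun xi := ⟨⟨⟨H.symm (⟨f xi.1, xi.1.2⟩, xi.2), xi.1⟩, hsymm _ _⟩, xi.1.2⟩
    left_inv z := by
      have hz : (⟨f z.1.1.2, z.2⟩ : U) = (H ⟨z.1.1.1, hmem z.1 z.2⟩).1 :=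
        Subtype.ext ((hH _).trans z.1.2).symm
      ext
      · simp only [hz, Prod.mk.eta, H.symm_apply_apply]
      · rfl
    right_inv xi := by
      ext
      · rfl
      · simp only [H.apply_symm_apply]
    continuous_toFun := by
      refine .prodMk (by fun_prop) (continuous_snd.comp (H.continuous.comp ?_))
      exact (continuous_fst.comp (continuous_subtype_val.comp continuous_subtype_val)).subtype_mk _
    continuous_invFun := by
      refine .subtype_mk (.subtype_mk (.prodMk (continuous_subtype_val.comp
        (H.symm.continuous.comp ?_)) (by fun_prop)) _) _
      exact .prodMk ((hf.comp (by fun_prop)).subtype_mk _) continuous_snd }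
  exact IsEvenlyCovered.to_isEvenlyCovered_preimage
    ⟨hI, f ⁻¹' U, hxU, hU.preimage hf, (hU.preimage hf).preimage (by fun_prop), H', fun _ => rfl⟩

/-! ### Geometry of the earring -/

lemma isClosed_heCircle (n : ℕ) : IsClosed (heCircle n) :=
  isClosed_eq (by fun_prop) continuous_const

lemma mem_HEset_iff {z : ℝ × ℝ} : z ∈ HEset ↔ ∃ n, 1 ≤ n ∧ z ∈ heCircle n := by
  simp [HEset]

lemma origin_mem_heCircle (n : ℕ) : ((0, 0) : ℝ × ℝ) ∈ heCircle n := by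
  simp [heCircle]

lemma circlePt_mem_heCircle (n : ℕ) (θ : ℝ) : circlePt n θ ∈ heCircle n := by
  simp only [heCircle, circlePt, Set.mem_ofPred_eq]
  linear_combination (1 / (n : ℝ)) ^ 2 * sin_sq_add_cos_sq θ

lemma circlePt_zero (θ : ℝ) : circlePt 0 θ = (0, 0) := by
  simp [circlePt]

lemma dist_origin_le_of_mem_heCircle {n : ℕ} {z : ℝ × ℝ} (hz : z ∈ heCircle n) :
    dist z (0, 0) ≤ 2 / n := by
  have hr : 0 ≤ 1 / (n : ℝ) := by positivity
  have hz' : (z.1 - 1 / n) ^ 2 + z.2 ^ 2 = (1 / n) ^ 2 := hz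
  rw [Prod.dist_eq, Real.dist_eq, Real.dist_eq, sub_zero, sub_zero, max_le_iff, abs_le, abs_le,
    show (2 : ℝ) / n = 2 * (1 / n) by ring]
  refine ⟨⟨?_, ?_⟩, ?_, ?_⟩ <;> nlinarith [sq_nonneg (z.1 - 1 / n), sq_nonneg z.2,
    sq_nonneg (z.1 - 2 / n), sq_nonneg (z.2 - 1 / n), sq_nonneg (z.2 + 1 / n)]

lemma eq_of_mem_heCircle_of_mem_heCircle {m n : ℕ} {z : ℝ × ℝ} (hm : z ∈ heCircle m)
    (hn : z ∈ heCircle n) (hz : z ≠ (0, 0)) : m = n := by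
  have hm' : z.1 ^ 2 + z.2 ^ 2 = 2 * (1 / m) * z.1 := by
    have : (z.1 - 1 / m) ^ 2 + z.2 ^ 2 = (1 / m) ^ 2 := hm
    linarith
  have hn' : z.1 ^ 2 + z.2 ^ 2 = 2 * (1 / n) * z.1 := by
    have : (z.1 - 1 / n) ^ 2 + z.2 ^ 2 = (1 / n) ^ 2 := hn
    linarith
  have hz1 : z.1 ≠ 0 := by
    intro h1
    have h2 : z.2 ^ 2 = 0 := by rw [h1] at hm'; linarith
    exact hz (Prod.ext h1 (pow_eq_zero_iff two_ne_zero |>.1 h2))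
  have : (1 : ℝ) / m = 1 / n := by
    have := mul_right_cancel₀ hz1 (show 2 * (1 / (m : ℝ)) * z.1 = 2 * (1 / n) * z.1 by linarith)
    linarith
  rw [one_div, one_div, inv_inj] at this
  exact_mod_cast this

/-- The circles of large index stay near the basepoint, and the finitely many others are
closed. -/
lemma eventually_mem_heCircle {c : ℕ} {z : ℝ × ℝ} (hz : z ∈ heCircle c) (h0 : z ≠ (0, 0)) :
    ∀ᶠ w in 𝓝[HEset] z, w ∈ heCircle c ∧ w ≠ (0, 0) := by
  obtain ⟨M, hM⟩ := exists_nat_gt (2 / dist z (0, 0))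
  have hM0 : (0 : ℝ) < M := lt_of_le_of_lt (by positivity) hM
  set S := Metric.closedBall ((0, 0) : ℝ × ℝ) (2 / M) ∪ ⋃ m ∈ (Finset.range M).erase c, heCircle m
  have hS : IsClosed S :=
    Metric.isClosed_closedBall.union (isClosed_biUnion_finset fun m _ => isClosed_heCircle m)
  have hzS : z ∉ S := by
    rintro (hball | hcirc)
    · rw [Metric.mem_closedBall, le_div_iff₀ hM0] at hball
      rw [div_lt_iff₀ (dist_pos.2 h0)] at hM
      linarith
    · obtain ⟨m, hm, hzm⟩ := Set.mem_iUnion₂.1 hcirc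
      exact (Finset.mem_erase.1 hm).1 (eq_of_mem_heCircle_of_mem_heCircle hzm hz h0)
  filter_upwards [self_mem_nhdsWithin, mem_nhdsWithin_of_mem_nhds (hS.isOpen_compl.mem_nhds hzS)]
    with w hw hwS
  have hw0 : w ≠ (0, 0) := fun h => hwS (Or.inl (h ▸ Metric.mem_closedBall_self (by positivity)))
  obtain ⟨m, -, hwm⟩ := mem_HEset_iff.1 hw
  refine ⟨?_, hw0⟩
  by_contra hwc
  have hmc : m ≠ c := fun h => hwc (h ▸ hwm)
  rcases lt_or_ge m M with hmM | hmM
  · exact hwS (Or.inr (Set.mem_iUnion₂.2 ⟨m, Finset.mem_erase.2 ⟨hmc, Finset.mem_range.2 hmM⟩, hwm⟩))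
  · refine hwS (Or.inl ((dist_origin_le_of_mem_heCircle hwm).trans ?_))
    exact div_le_div_of_nonneg_left zero_le_two hM0 (by exact_mod_cast hmM)

/-! ### The angular coordinate of a circle -/

/-- `centre - z` for the centre `(1/c, 0)` of the `c`-th circle, so that `circlePt c θ` has
argument `θ`. -/
def centreOffset (c : ℕ) (z : ℝ × ℝ) : ℂ :=
  ((1 / c - z.1 : ℝ) : ℂ) + ((-z.2 : ℝ) : ℂ) * Complex.I

open scoped Classical in
def circleAngle (c : ℕ) (z : ℝ × ℝ) : Real.Angle :=
  if z ∈ heCircle c then (Complex.arg (centreOffset c z) : Real.Angle) else 0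

lemma centreOffset_ne_zero {c : ℕ} (hc : c ≠ 0) {z : ℝ × ℝ} (hz : z ∈ heCircle c) :
    centreOffset c z ≠ 0 := by
  intro h
  have h1 : 1 / (c : ℝ) - z.1 = 0 := by simpa [centreOffset] using congrArg Complex.re h
  have h2 : z.2 = 0 := by simpa [centreOffset] using congrArg Complex.im h
  have hz' : (z.1 - 1 / c) ^ 2 + z.2 ^ 2 = (1 / c) ^ 2 := hz
  rw [h2, show z.1 - 1 / c = 0 by linarith] at hz'
  have : (0 : ℝ) < 1 / c := by positivity
  nlinarith

lemma circleAngle_origin (c : ℕ) : circleAngle c (0, 0) = 0 := by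
  have : centreOffset c (0, 0) = ((1 / c : ℝ) : ℂ) := by simp [centreOffset]
  rw [circleAngle, if_pos (origin_mem_heCircle c), this,
    Complex.arg_ofReal_of_nonneg (by positivity), Real.Angle.coe_zero]

lemma circleAngle_circlePt {c : ℕ} (hc : c ≠ 0) (θ : ℝ) : circleAngle c (circlePt c θ) = θ := by
  have : centreOffset c (circlePt c θ) = ((1 / c : ℝ) : ℂ) * (cos θ + sin θ * Complex.I) := by
    simp only [centreOffset, circlePt]
    push_cast
    ring
  rw [circleAngle, if_pos (circlePt_mem_heCircle c θ), this,
    Complex.arg_real_mul _ (by positivity)]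
  simpa using Complex.arg_cos_add_sin_mul_I_coe_angle θ

lemma circleAngle_eq_zero_of_mem_heCircle {c m : ℕ} (hmc : m ≠ c) {z : ℝ × ℝ}
    (hz : z ∈ heCircle m) (h0 : z ≠ (0, 0)) : circleAngle c z = 0 := by
  rw [circleAngle, if_neg fun h => hmc (eq_of_mem_heCircle_of_mem_heCircle hz h h0)]

lemma circleAngle_circlePt_of_ne {c j : ℕ} (hj : j ≠ c) (θ : ℝ) :
    circleAngle c (circlePt j θ) = 0 := by
  by_cases h0 : circlePt j θ = (0, 0)
  · rw [h0, circleAngle_origin]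
  · exact circleAngle_eq_zero_of_mem_heCircle hj (circlePt_mem_heCircle j θ) h0

lemma circleAngle_one_eq_pi {z : ℝ × ℝ} (h : circleAngle 1 z = π) : z = (2, 0) := by
  by_cases hz1 : z ∈ heCircle 1
  · rw [circleAngle, if_pos hz1] at h
    have harg : Complex.arg (centreOffset 1 z) = π := by
      have := congrArg Real.Angle.toReal h
      rwa [Real.Angle.toReal_pi, Real.Angle.toReal_coe_eq_self_iff.2
        ⟨Complex.neg_pi_lt_arg _, Complex.arg_le_pi _⟩] at this
    obtain ⟨hre, him⟩ := Complex.arg_eq_pi_iff.1 harg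
    simp only [centreOffset, Nat.cast_one, div_one, Complex.add_re, Complex.ofReal_re,
      Complex.mul_re, Complex.ofReal_im, Complex.I_re, Complex.I_im, Complex.add_im,
      Complex.mul_im] at hre him
    have hz1' : (z.1 - 1) ^ 2 + z.2 ^ 2 = 1 := by simpa [heCircle] using hz1
    have h2 : z.2 = 0 := by linarith
    have h1 : z.1 = 2 := by rw [h2] at hz1'; nlinarith
    exact Prod.ext h1 h2
  · rw [circleAngle, if_neg hz1] at h
    exact absurd h.symm Real.Angle.pi_ne_zero

open scoped Classical in
lemma continuousOn_circleAngle {c : ℕ} (hc : c ≠ 0) : ContinuousOn (circleAngle c) HEset := by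
  have harg {z : ℝ × ℝ} (hz : z ∈ heCircle c) :
      ContinuousAt (fun w => (Complex.arg (centreOffset c w) : Real.Angle)) z :=
    (Complex.continuousAt_arg_coe_angle (centreOffset_ne_zero hc hz)).comp
      (by unfold centreOffset; fun_prop)
  intro z hz
  by_cases hzc : z ∈ heCircle c
  · by_cases h0 : z = (0, 0)
    · subst h0
      have hg := (harg hzc).tendsto
      rw [show (Complex.arg (centreOffset c (0, 0)) : Real.Angle) = 0 by
        simpa [circleAngle, origin_mem_heCircle] using circleAngle_origin c] at hg
      rw [ContinuousWithinAt, circleAngle_origin]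
      exact (hg.mono_left (inf_le_left.trans nhdsWithin_le_nhds)).if tendsto_const_nhds
    · refine ((harg hzc).continuousWithinAt).congr_of_eventuallyEq ?_ (if_pos hzc)
      filter_upwards [eventually_mem_heCircle hzc h0] with w hw
      exact if_pos hw.1
  · obtain ⟨m, -, hzm⟩ := mem_HEset_iff.1 hz
    have hmc : m ≠ c := fun h => hzc (h ▸ hzm)
    have h0 : z ≠ (0, 0) := fun h => hzc (h ▸ origin_mem_heCircle c)
    refine continuousWithinAt_const.congr_of_eventuallyEq ?_
      (circleAngle_eq_zero_of_mem_heCircle hmc hzm h0)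
    filter_upwards [eventually_mem_heCircle hzm h0] with w hw
    exact circleAngle_eq_zero_of_mem_heCircle hmc hw.1 hw.2

lemma continuous_circleAngle_restrict {c : ℕ} (hc : c ≠ 0) :
    Continuous fun z : HEset => circleAngle c z :=
  (continuousOn_circleAngle hc).domRestrict

/-! ### Unwrapping the first circle -/

/-- The covering of the earring that unwraps its first circle. -/
abbrev UnwrappedHE : Type := {q : ℝ × HEset // (q.1 : Real.Angle) = circleAngle 1 q.2}

def unwrappedBase : UnwrappedHE := ⟨(0, hep), by simp [hep, circleAngle_origin]⟩

lemma isCoveringMap_unwrappedHE : IsCoveringMap fun q : UnwrappedHE => q.1.2 :=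
  (AddCircle.isCoveringMap_coe (2 * π)).pullback (continuous_circleAngle_restrict one_ne_zero)

/-- The angular coordinate of the `c`-th circle, seen only over the sheet `|t| < π` of the
unwrapped first circle. -/
def levelAngle (c : ℕ) (q : ℝ × (ℝ × ℝ)) : Real.Angle :=
  if |q.1| < π then circleAngle c q.2 else 0

lemma levelAngle_of_circleAngle_eq_zero {c : ℕ} {z : ℝ × ℝ} (h : circleAngle c z = 0) (r : ℝ) :
    levelAngle c (r, z) = 0 := by
  unfold levelAngle
  split_ifs <;> simp [h]

lemma continuous_levelAngle {c : ℕ} (hc : 2 ≤ c) :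
    Continuous fun q : UnwrappedHE => levelAngle c (q.1.1, q.1.2) := by
  have hcirc : Continuous fun q : UnwrappedHE => circleAngle c q.1.2 :=
    (continuous_circleAngle_restrict (by omega)).comp (continuous_snd.comp continuous_subtype_val)
  have habs : Continuous fun q : UnwrappedHE => |q.1.1| := by fun_prop
  refine continuous_iff_continuousAt.2 fun q => ?_
  rcases lt_trichotomy |q.1.1| π with hlt | heq | hgt
  · refine hcirc.continuousAt.congr ?_
    filter_upwards [(isOpen_lt habs continuous_const).mem_nhds hlt] with q' hq'
    exact (if_pos hq').symm
  · -- such a point lies over `(2, 0)`, near which the `c`-th circle is absent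
    have hπ : ((q.1.1 : ℝ) : Real.Angle) = π := by
      rcases abs_eq pi_pos.le |>.1 heq with h | h <;> simp [h]
    have h2 : (q.1.2 : ℝ × ℝ) = (2, 0) := circleAngle_one_eq_pi (q.2 ▸ hπ)
    have hnear : Tendsto (fun q' : UnwrappedHE => (q'.1.2 : ℝ × ℝ)) (𝓝 q) (𝓝[HEset] (2, 0)) :=
      tendsto_nhdsWithin_iff.2 ⟨h2 ▸ (by fun_prop : Continuous fun q' : UnwrappedHE =>
        (q'.1.2 : ℝ × ℝ)).continuousAt, Eventually.of_forall fun q' => q'.1.2.2⟩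
    have hzero : ∀ᶠ q' in 𝓝 q, levelAngle c (q'.1.1, q'.1.2) = 0 := by
      filter_upwards [hnear.eventually (eventually_mem_heCircle (c := 1)
        (by norm_num [heCircle]) (by norm_num))] with q' hq'
      exact levelAngle_of_circleAngle_eq_zero
        (circleAngle_eq_zero_of_mem_heCircle (by omega) hq'.1 hq'.2) _
    exact (continuousAt_const (y := 0)).congr (hzero.mono fun _ h => h.symm)
  · refine (continuousAt_const (y := 0)).congr ?_
    filter_upwards [(isOpen_lt continuous_const habs).mem_nhds hgt] with q' hq'
    exact (if_neg hq'.not_gt).symm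

def levelAngleMap {c : ℕ} (hc : 2 ≤ c) : C(UnwrappedHE, Real.Angle) :=
  ⟨fun q => levelAngle c (q.1.1, q.1.2), continuous_levelAngle hc⟩

lemma levelAngleMap_unwrappedBase {c : ℕ} (hc : 2 ≤ c) :
    levelAngleMap hc unwrappedBase = ((0 : ℝ) : Real.Angle) :=
  levelAngle_of_circleAngle_eq_zero (circleAngle_origin c) 0

/-- `2π` times the number of turns `γ` makes around the `c`-th circle while its lift to
`UnwrappedHE` is over the sheet through `0`. -/
def levelWinding {c : ℕ} (hc : 2 ≤ c) (γ : Path hep hep) : ℝ :=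
  (AddCircle.isCoveringMap_coe (2 * π)).liftPath
    ((levelAngleMap hc).comp (isCoveringMap_unwrappedHE.liftPath γ unwrappedBase γ.source)) 0
    ((congrArg (levelAngleMap hc) (IsCoveringMap.liftPath_zero ..)).trans
      (levelAngleMap_unwrappedBase hc)) 1

theorem levelWinding_eq_of_homotopic {c : ℕ} (hc : 2 ≤ c) {γ₀ γ₁ : Path hep hep}
    (h : γ₀.Homotopic γ₁) : levelWinding hc γ₀ = levelWinding hc γ₁ :=
  (AddCircle.isCoveringMap_coe (2 * π)).liftPath_apply_one_eq_of_homotopicRel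
    ((isCoveringMap_unwrappedHE.homotopicRel_liftPath h _ _ _).comp_continuousMap _) _ _ _

def IsLevelLift (c : ℕ) (γ : Path hep hep) (u v : I → ℝ) : Prop :=
  ∀ t, (u t : Real.Angle) = circleAngle 1 (γ t) ∧ (v t : Real.Angle) = levelAngle c (u t, γ t)

theorem IsLevelLift.levelWinding_eq {c : ℕ} (hc : 2 ≤ c) {γ : Path hep hep} {a b : ℝ}
    {u : Path 0 a} {v : Path 0 b} (h : IsLevelLift c γ u v) : levelWinding hc γ = b := by
  have hΓ : isCoveringMap_unwrappedHE.liftPath γ unwrappedBase γ.source =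
      ⟨fun t => ⟨(u t, γ t), (h t).1⟩, by fun_prop⟩ := by
    refine ((isCoveringMap_unwrappedHE.eq_liftPath_iff' _).2 ⟨rfl, ?_⟩).symm
    simp [unwrappedBase]
  have hv : (v : C(I, ℝ)) = (AddCircle.isCoveringMap_coe (2 * π)).liftPath
      ((levelAngleMap hc).comp (isCoveringMap_unwrappedHE.liftPath γ unwrappedBase γ.source)) 0
      ((congrArg (levelAngleMap hc) (IsCoveringMap.liftPath_zero ..)).trans
        (levelAngleMap_unwrappedBase hc)) := by
    refine ((AddCircle.isCoveringMap_coe (2 * π)).eq_liftPath_iff' _).2 ⟨?_, v.source⟩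
    funext t
    rw [hΓ]
    exact (h t).2
  rw [levelWinding, ← hv]
  exact v.target

lemma IsLevelLift.trans {c : ℕ} {γ γ' : Path hep hep} {a b a' b' a'' b'' : ℝ} {u : Path a b}
    {v : Path a' b'} {u' : Path b a''} {v' : Path b' b''} (h : IsLevelLift c γ u v)
    (h' : IsLevelLift c γ' u' v') : IsLevelLift c (γ.trans γ') (u.trans u') (v.trans v') := by
  intro t
  simp only [Path.trans_apply]
  split_ifs
  exacts [h _, h' _]

/-! ### Level lifts of words -/

lemma coe_two_pi_mul_int (m : ℤ) : ((2 * π * m : ℝ) : Real.Angle) = 0 :=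
  Real.Angle.coe_eq_zero_iff.2 ⟨m, by rw [zsmul_eq_mul]; ring⟩

lemma coe_two_pi_mul_int_add (m : ℤ) (x : ℝ) : ((2 * π * m + x : ℝ) : Real.Angle) = x :=
  Real.Angle.angle_eq_iff_two_pi_dvd_sub.2 ⟨m, by ring⟩

def letterExponent (c : ℕ) (x : ℕ × Bool) : ℤ := if x.1 = c then (if x.2 then 1 else -1) else 0

lemma heLetter_apply (x : ℕ × Bool) (t : I) :
    (heLetter x t : ℝ × ℝ) = circlePt x.1 (2 * π * if x.2 then (t : ℝ) else 1 - t) := by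
  obtain ⟨j, _ | _⟩ := x
  · simp [heLetter, xLoop, unitInterval.coe_symm_eq]
  · simp [heLetter, xLoop]

lemma circleAngle_heLetter {c : ℕ} (hc : c ≠ 0) (x : ℕ × Bool) (t : I) :
    circleAngle c (heLetter x t) = (2 * π * (letterExponent c x * t) : ℝ) := by
  obtain ⟨j, b⟩ := x
  rw [heLetter_apply, letterExponent]
  by_cases hj : j = c
  · subst hj
    rw [if_pos rfl, circleAngle_circlePt hc]
    cases b <;> simp [mul_sub]
  · simp [hj, circleAngle_circlePt_of_ne hj]

def levelPath (a e : ℤ) : Path (2 * π * a) (2 * π * (a + e : ℤ)) where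
  toFun t := 2 * π * (a + e * t)
  continuous_toFun := by fun_prop
  source' := by simp
  target' := by simp

lemma levelPath_apply (a e : ℤ) (t : I) : levelPath a e t = 2 * π * a + 2 * π * (e * t) := by
  simp only [levelPath, Path.coe_mk_mk]
  ring

/-- Reading the letter `x` at level `s.1` of the unwrapped first circle moves the level by the
exponent of `x₁` in `x`, and adds to the counter `s.2` the exponent of `x_c` if `s.1 = 0`. -/
def levelStep (c : ℕ) (s : ℤ × ℤ) (x : ℕ × Bool) : ℤ × ℤ :=
  (s.1 + letterExponent 1 x, s.2 + if s.1 = 0 then letterExponent c x else 0)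

lemma isLevelLift_refl (c : ℕ) (s : ℤ × ℤ) :
    IsLevelLift c (Path.refl hep) (Path.refl (2 * π * s.1)) (Path.refl (2 * π * s.2)) := by
  intro t
  simp only [Path.refl_apply, coe_two_pi_mul_int]
  exact ⟨(circleAngle_origin 1).symm,
    (levelAngle_of_circleAngle_eq_zero (circleAngle_origin c) _).symm⟩

lemma isLevelLift_heLetter {c : ℕ} (hc : 2 ≤ c) (s : ℤ × ℤ) (x : ℕ × Bool) :
    IsLevelLift c (heLetter x) (levelPath s.1 (letterExponent 1 x))
      (levelPath s.2 (if s.1 = 0 then letterExponent c x else 0)) := by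
  intro t
  simp only [levelPath_apply, coe_two_pi_mul_int_add]
  refine ⟨(circleAngle_heLetter one_ne_zero x t).symm, ?_⟩
  by_cases hx : x.1 = 1
  · have hxc : letterExponent c x = 0 := if_neg (by omega)
    rw [levelAngle_of_circleAngle_eq_zero]
    · simp [hxc]
    · rw [circleAngle_heLetter (by omega), hxc]
      simp
  · rw [show letterExponent 1 x = 0 from if_neg hx, Int.cast_zero, zero_mul, mul_zero, add_zero]
    by_cases hs : s.1 = 0
    · simp [hs, levelAngle, pi_pos, circleAngle_heLetter (show c ≠ 0 by omega)]
    · have : ¬ |2 * π * s.1| < π := by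
        rw [abs_mul, abs_of_pos two_pi_pos, not_lt]
        have : (1 : ℝ) ≤ |(s.1 : ℝ)| := by exact_mod_cast Int.one_le_abs hs
        nlinarith [pi_pos]
      rw [levelAngle, if_neg this, if_neg hs]
      simp

lemma exists_isLevelLift_wordLoop {c : ℕ} (hc : 2 ≤ c) (L : List (ℕ × Bool)) (s : ℤ × ℤ) :
    ∃ (u : Path (2 * π * s.1) (2 * π * (L.foldl (levelStep c) s).1))
      (v : Path (2 * π * s.2) (2 * π * (L.foldl (levelStep c) s).2)),
      IsLevelLift c (wordLoop L) u v := by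
  induction L generalizing s with
  | nil => exact ⟨_, _, isLevelLift_refl c s⟩
  | cons x L ih =>
    obtain ⟨u, v, h⟩ := ih (levelStep c s x)
    exact ⟨(levelPath s.1 _).trans u, (levelPath s.2 _).trans v,
      (isLevelLift_heLetter hc s x).trans h⟩

theorem levelWinding_wordLoop {c : ℕ} (hc : 2 ≤ c) (L : List (ℕ × Bool)) :
    levelWinding hc (wordLoop L) = 2 * π * (L.foldl (levelStep c) (0, 0)).2 := by
  obtain ⟨u, v, h⟩ := exists_isLevelLift_wordLoop hc L (0, 0)
  exact IsLevelLift.levelWinding_eq hc (u := u.cast (by simp) rfl) (v := v.cast (by simp) rfl) h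

lemma foldl_flatten_replicate {α β : Type*} (f : β → α → β) (L : List α) (N : ℕ) (s : β) :
    ((List.replicate N L).flatten).foldl f s = (fun s => L.foldl f s)^[N] s := by
  rw [List.foldl_flatten]
  induction N generalizing s with
  | zero => rfl
  | succ N ih => rw [List.replicate_succ, List.foldl_cons, ih, Function.iterate_succ_apply]

lemma foldl_levelStep_commWord {c n k : ℕ} (hn : n ≠ 1) (hk : k ≠ 1) (s : ℤ × ℤ) :
    (commWord n k).foldl (levelStep c) s = s := by
  simp only [commWord, List.foldl_cons, List.foldl_nil, levelStep, letterExponent, if_neg hn,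
    if_neg hk, add_zero, Bool.false_eq_true, ↓reduceIte]
  split_ifs <;> simp

lemma foldl_levelStep_commWord_one {k : ℕ} (hk : k ≠ 1) (l : ℤ) :
    (commWord 1 k).foldl (levelStep k) (0, l) = (0, l - 1) := by
  simp [commWord, levelStep, letterExponent, hk, Ne.symm hk, ← sub_eq_add_neg]

lemma foldl_levelStep_aLoop {n k : ℕ} (hn : n ≠ 1) (hk : k ≠ 1) :
    ((List.replicate (n + k) (commWord n k)).flatten).foldl (levelStep k) (0, 0) = (0, 0) := by
  rw [foldl_flatten_replicate]
  exact Function.iterate_fixed (foldl_levelStep_commWord hn hk _) _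

lemma foldl_levelStep_wLoop {k : ℕ} (hk : k ≠ 1) (N : ℕ) :
    ((List.replicate N (commWord 1 k)).flatten).foldl (levelStep k) (0, 0) = (0, -(N : ℤ)) := by
  rw [foldl_flatten_replicate]
  induction N with
  | zero => rfl
  | succ N ih =>
    rw [Function.iterate_succ_apply', ih, foldl_levelStep_commWord_one hk]
    push_cast
    ring_nf

lemma mk_wordLoop_append (L L' : List (ℕ × Bool)) :
    (⟦wordLoop (L ++ L')⟧ : piHE) = Path.Homotopic.Quotient.trans ⟦wordLoop L⟧ ⟦wordLoop L'⟧ := by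
  induction L with
  | nil => exact (Path.Homotopic.Quotient.refl_trans _).symm
  | cons x L ih =>
    change Path.Homotopic.Quotient.trans ⟦heLetter x⟧ ⟦wordLoop (L ++ L')⟧ =
      Path.Homotopic.Quotient.trans (Path.Homotopic.Quotient.trans ⟦heLetter x⟧ ⟦wordLoop L⟧) _
    rw [ih]
    exact (Path.Homotopic.Quotient.trans_assoc _ _ _).symm

theorem refl_not_mem_preimage_Aset :
    ((⟦Path.refl hep⟧, ⟦Path.refl hep⟧) : piHE × piHE) ∉ piMul ⁻¹' Aset := by
  rintro ⟨n, k, hn, hk, h⟩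
  have hword : (⟦wordLoop []⟧ : piHE) = ⟦wordLoop ((List.replicate (n + k) (commWord n k)).flatten
      ++ (List.replicate n (commWord 1 k)).flatten)⟧ :=
    ((Path.Homotopic.Quotient.refl_trans _).symm.trans h).trans (mk_wordLoop_append _ _).symm
  have := levelWinding_eq_of_homotopic hk (Quotient.exact hword)
  rw [levelWinding_wordLoop, levelWinding_wordLoop, List.foldl_append,
    foldl_levelStep_aLoop (by omega) (by omega), foldl_levelStep_wLoop (by omega)] at this
  have hn0 : (n : ℝ) = 0 := by simpa using this
  norm_cast at hn0
  omega

/-! ### Approximating the basepoint -/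

lemma exists_pos_forall_dist_lt_mk_mem {U : Set piHE} (hU : IsOpen U) {f : Path hep hep}
    (hf : (⟦f⟧ : piHE) ∈ U) :
    ∃ ε > 0, ∀ g : Path hep hep, (∀ t, dist (g t) (f t) < ε) → (⟦g⟧ : piHE) ∈ U := by
  obtain ⟨O, hO, hOU⟩ := isOpen_induced_iff.1 (hU.preimage continuous_quotient_mk')
  have hfO : (f : C(I, HEset)) ∈ O := by
    rw [← Set.mem_preimage, hOU]
    exact hf
  obtain ⟨ε, hε, hball⟩ := Metric.isOpen_iff.1 hO _ hfO
  refine ⟨ε, hε, fun g hg => ?_⟩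
  have : (g : C(I, HEset)) ∈ O := hball ((ContinuousMap.dist_lt_iff_of_nonempty).2 hg)
  rw [← Set.mem_preimage, hOU] at this
  exact this

lemma exists_forall_two_div_lt {ε : ℝ} (hε : 0 < ε) : ∃ N : ℕ, ∀ n ≥ N, 2 / (n : ℝ) < ε :=
  eventually_atTop.1 ((tendsto_const_div_atTop_nhds_zero_nat 2).eventually (gt_mem_nhds hε))

lemma dist_heLetter_hep_le (x : ℕ × Bool) (t : I) : dist (heLetter x t) hep ≤ 2 / x.1 := by
  rw [Subtype.dist_eq, heLetter_apply]
  exact dist_origin_le_of_mem_heCircle (circlePt_mem_heCircle _ _)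

lemma heLetter_zero (b : Bool) : heLetter (0, b) = Path.refl hep := by
  have : xLoop 0 = Path.refl hep := Path.ext (funext fun _ => Subtype.ext (circlePt_zero _))
  cases b <;> simp [heLetter, this]

lemma dist_wordLoop_hep_le {B : ℝ} (hB : 0 ≤ B) {L : List (ℕ × Bool)}
    (hL : ∀ x ∈ L, 2 / x.1 ≤ B) (t : I) : dist (wordLoop L t) hep ≤ B := by
  induction L generalizing t with
  | nil => simpa [wordLoop] using hB
  | cons x L ih =>
    change dist (((heLetter x).trans (wordLoop L)) t) hep ≤ B
    rw [Path.trans_apply]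
    split_ifs
    · exact (dist_heLetter_hep_le x _).trans (hL x List.mem_cons_self)
    · exact ih (fun y hy => hL y (List.mem_cons_of_mem _ hy)) _

lemma dist_wordLoop_map_le {B : ℝ} (hB : 0 ≤ B) (φ : ℕ × Bool → ℕ × Bool) {L : List (ℕ × Bool)}
    (hL : ∀ x ∈ L, ∀ t, dist (heLetter (φ x) t) (heLetter x t) ≤ B) (t : I) :
    dist (wordLoop (L.map φ) t) (wordLoop L t) ≤ B := by
  induction L generalizing t with
  | nil => simpa [wordLoop] using hB
  | cons x L ih =>
    change dist (((heLetter (φ x)).trans (wordLoop (L.map φ))) t)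
      (((heLetter x).trans (wordLoop L)) t) ≤ B
    rw [Path.trans_apply, Path.trans_apply]
    split_ifs
    · exact hL x List.mem_cons_self _
    · exact ih (fun y hy => hL y (List.mem_cons_of_mem _ hy)) _

lemma mk_wordLoop_commWord_one_zero (N : ℕ) :
    (⟦wordLoop ((List.replicate N (commWord 1 0)).flatten)⟧ : piHE) = ⟦Path.refl hep⟧ := by
  induction N with
  | zero => rfl
  | succ N ih =>
    rw [List.replicate_succ, List.flatten_cons, mk_wordLoop_append, ih]
    change Path.Homotopic.Quotient.trans (Path.Homotopic.Quotient.mk ((xLoop 1).trans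
      ((heLetter (0, true)).trans ((xLoop 1).symm.trans ((heLetter (0, false)).trans
      (Path.refl hep)))))) (Path.Homotopic.Quotient.refl hep) = Path.Homotopic.Quotient.refl hep
    simp only [heLetter_zero, Path.Homotopic.Quotient.mk_trans, Path.Homotopic.Quotient.mk_refl,
      Path.Homotopic.Quotient.mk_symm, Path.Homotopic.Quotient.refl_trans,
      Path.Homotopic.Quotient.trans_refl, Path.Homotopic.Quotient.trans_symm]

lemma exists_forall_mk_aLoop_mem {U : Set piHE} (hU : IsOpen U)
    (hP : (⟦Path.refl hep⟧ : piHE) ∈ U) : ∃ N, ∀ n ≥ N, ∀ k ≥ n, (⟦aLoop n k⟧ : piHE) ∈ U := by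
  obtain ⟨ε, hε, hU⟩ := exists_pos_forall_dist_lt_mk_mem hU hP
  obtain ⟨N, hN⟩ := exists_forall_two_div_lt hε
  refine ⟨max N 1, fun n hn k hk => hU _ fun t => ?_⟩
  have hn0 : (0 : ℝ) < n := by exact_mod_cast (le_of_max_le_right hn)
  refine lt_of_le_of_lt (dist_wordLoop_hep_le (by positivity) (fun x hx => ?_) t)
    (hN n (le_of_max_le_left hn))
  obtain ⟨B, hB, hxB⟩ := List.mem_flatten.1 hx
  rw [List.eq_of_mem_replicate hB] at hxB
  have : n ≤ x.1 := by
    simp only [commWord, List.mem_cons, List.not_mem_nil, or_false] at hxB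
    rcases hxB with rfl | rfl | rfl | rfl <;> simp [hk]
  exact div_le_div_of_nonneg_left zero_le_two hn0 (by exact_mod_cast this)

/-- `w(n,k)` is uniformly within `2/k` of the null-homotopic loop `(x₁ x₀ x₁⁻¹ x₀⁻¹)^n`. -/
lemma exists_forall_mk_wLoop_mem {V : Set piHE} (hV : IsOpen V)
    (hP : (⟦Path.refl hep⟧ : piHE) ∈ V) (n : ℕ) : ∃ K, ∀ k ≥ K, (⟦wLoop n k⟧ : piHE) ∈ V := by
  rw [← mk_wordLoop_commWord_one_zero n] at hP
  obtain ⟨ε, hε, hV⟩ := exists_pos_forall_dist_lt_mk_mem hV hP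
  obtain ⟨K, hK⟩ := exists_forall_two_div_lt hε
  refine ⟨max K 2, fun k hk => hV _ fun t => ?_⟩
  let φ : ℕ × Bool → ℕ × Bool := fun x => if x.1 = k then (0, x.2) else x
  have hφ : ((List.replicate n (commWord 1 k)).flatten).map φ =
      (List.replicate n (commWord 1 0)).flatten := by
    have : (1 : ℕ) ≠ k := by omega
    simp [φ, List.map_flatten, List.map_replicate, commWord, this]
  rw [dist_comm, ← hφ]
  refine lt_of_le_of_lt (dist_wordLoop_map_le (by positivity) φ (fun x _ t => ?_) t)
    (hK k (le_of_max_le_left hk))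
  by_cases hx : x.1 = k
  · simpa [φ, hx, heLetter_zero, dist_comm] using dist_heLetter_hep_le x t
  · simp [φ, hx, div_nonneg]

theorem refl_mem_closure_preimage_Aset :
    ((⟦Path.refl hep⟧, ⟦Path.refl hep⟧) : piHE × piHE) ∈ closure (piMul ⁻¹' Aset) := by
  refine mem_closure_iff.2 fun O hO hPO => ?_
  obtain ⟨U, V, hU, hV, hPU, hPV, hUV⟩ := isOpen_prod_iff.1 hO _ _ hPO
  obtain ⟨N, hN⟩ := exists_forall_mk_aLoop_mem hU hPU
  obtain ⟨K, hK⟩ := exists_forall_mk_wLoop_mem hV hPV (max N 2)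
  refine ⟨(⟦aLoop (max N 2) (max K (max N 2))⟧, ⟦wLoop (max N 2) (max K (max N 2))⟧),
    hUV ⟨hN _ (le_max_left ..) _ (le_max_right ..), hK _ (le_max_left ..)⟩,
    _, _, le_max_right .., (le_max_right ..).trans (le_max_right ..), rfl⟩

/-- `M⁻¹(A)` is not closed in `π₁(HE,p) × π₁(HE,p)`: the point `([P],[P])` lies in the
closure of `M⁻¹(A)` but not in `M⁻¹(A)`. -/
theorem preimage_Aset_not_closed :
    ((⟦Path.refl hep⟧, ⟦Path.refl hep⟧) : piHE × piHE) ∈ closure (piMul ⁻¹' Aset) ∧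
    ((⟦Path.refl hep⟧, ⟦Path.refl hep⟧) : piHE × piHE) ∉ piMul ⁻¹' Aset ∧
    ¬ IsClosed (piMul ⁻¹' Aset) :=
  ⟨refl_mem_closure_preimage_Aset, refl_not_mem_preimage_Aset,
    fun h => refl_not_mem_preimage_Aset (h.closure_eq ▸ refl_mem_closure_preimage_Aset)⟩

end
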